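/- arXiv:1204.2980 — 2 statements merged into one kernel-verified Lean document; each statement's English description precedes it below -/
import Mathlib

section
/- Let X_0,...,X_n and Y_0,...,Y_n be random variables on a common probability space with values in Polish spaces. If for each i = 0,1,...,n-1 the Markov chain Y^i ↔ X^i ↔ X_{i+1} holds (Y^i conditionally independent of X_{i+1} given X^i), then the regular conditional distribution of Y^n given X^n factorizes causally: P_{Y^n|X^n}(dy^n|x^n) = ⊗_{i=0}^n P_{Y_i|Y^{i-1},X^i}(dy_i|y^{i-1},x^i) for P_{X^n}-almost all x^n. -/
/-!
Write `K m` for the causal product kernel from `(x_0, …, x_{m-1})` to `(y_0, …, y_{m-1})`.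
By induction on `m`, the joint law of `(X^{m-1}, Y^{m-1})` is `P_{X^{m-1}} ⊗ K m`. In the step,
the Markov chain `Y^{m-1} ↔ X^{m-1} ↔ X_m` says that adding `X_m` to the conditioning does not
change the conditional law of `Y^{m-1}`, which is therefore `K m` applied to the first `m`
coordinates of `X^m`; composing it with the conditional law of `Y_m` given `(Y^{m-1}, X^m)`
gives `K (m + 1)`. Uniqueness of regular conditional distributions turns the identity of joint
laws into the almost-everywhere statement.
-/

open MeasureTheory ProbabilityTheory

/-- The causal `(m)`-fold product measure on `Π j : Fin m, 𝒴 j` built from the stage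
conditional kernels `κ i` of `Y_i` given `(Y^{i-1}, X^i)`, evaluated along the source
sequence `x`.  This is `⊗_{i=0}^{m-1} P_{Y_i | Y^{i-1}, X^i}(dy_i | y^{i-1}, x^i)`. -/
noncomputable def causalProd {𝒳 𝒴 : ℕ → Type*} [∀ i, MeasurableSpace (𝒳 i)]
    [∀ i, MeasurableSpace (𝒴 i)]
    (κ : (i : ℕ) → Kernel ((Π j : Fin i, 𝒴 j) × (Π j : Fin (i + 1), 𝒳 j)) (𝒴 i)) :
    (m : ℕ) → (Π j : Fin m, 𝒳 j) → Measure (Π j : Fin m, 𝒴 j)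
  | 0, _ => Measure.dirac (fun j => j.elim0)
  | (m + 1), x =>
      (causalProd κ m (fun j => x j.castSucc)).bind
        (fun y => (κ m (y, x)).map (fun z => (Fin.snoc y z : Π j : Fin (m + 1), 𝒴 j)))

lemma measurable_fin_init {m : ℕ} {α : Fin (m + 1) → Type*} [∀ i, MeasurableSpace (α i)] :
    Measurable (Fin.init : (Π j, α j) → Π j : Fin m, α j.castSucc) :=
  measurable_pi_lambda _ fun _ ↦ measurable_pi_apply _

lemma measurable_fin_snoc {m : ℕ} {α : Fin (m + 1) → Type*} [∀ i, MeasurableSpace (α i)] :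
    Measurable (fun p : (Π j : Fin m, α j.castSucc) × α (Fin.last m) ↦
      (Fin.snoc p.1 p.2 : Π j, α j)) := by
  refine measurable_pi_lambda _ fun j ↦ ?_
  induction j using Fin.lastCases with
  | last => simpa only [Fin.snoc_last] using measurable_snd
  | cast j =>
    simp only [Fin.snoc_castSucc]
    exact (measurable_pi_apply j).comp measurable_fst

def MeasurableEquiv.piFinSnoc {m : ℕ} (α : Fin (m + 1) → Type*) [∀ i, MeasurableSpace (α i)] :
    (Π j : Fin m, α j.castSucc) × α (Fin.last m) ≃ᵐ Π j, α j where
  toFun p := Fin.snoc p.1 p.2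
  invFun x := (Fin.init x, x (Fin.last m))
  left_inv p := by simp
  right_inv := Fin.snoc_init_self
  measurable_toFun := measurable_fin_snoc
  measurable_invFun := measurable_fin_init.prodMk (measurable_pi_apply _)

lemma MeasurableEquiv.piFinSnoc_comp_prodMk {Ω : Type*} {β : ℕ → Type*}
    [∀ i, MeasurableSpace (β i)] (m : ℕ) (Z : (i : ℕ) → Ω → β i) :
    (MeasurableEquiv.piFinSnoc fun j : Fin (m + 1) ↦ β j) ∘
        (fun ω ↦ ((fun j : Fin m ↦ Z j ω), Z m ω)) = fun ω (j : Fin (m + 1)) ↦ Z j ω :=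
  funext fun ω ↦ Fin.snoc_init_self (fun j : Fin (m + 1) ↦ Z j ω)

namespace ProbabilityTheory.Kernel

variable {α β γ δ : Type*} {mα : MeasurableSpace α} {mβ : MeasurableSpace β}
  {mγ : MeasurableSpace γ} {mδ : MeasurableSpace δ}

lemma map_compProd_apply_eq_bind (κ : Kernel α β) [IsSFiniteKernel κ] (η : Kernel (α × β) γ)
    [IsSFiniteKernel η] {f : β × γ → δ} (hf : Measurable f) (a : α) :
    (κ ⊗ₖ η).map f a = (κ a).bind (fun b ↦ (η (a, b)).map (fun c ↦ f (b, c))) := by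
  have hsec {s : Set δ} (hs : MeasurableSet s) :
      (fun b ↦ (η (a, b)).map (fun c ↦ f (b, c)) s) = fun b ↦ η (a, b) {c | f (b, c) ∈ s} :=
    funext fun b ↦ Measure.map_apply (hf.comp measurable_prodMk_left) hs
  have hmeas : Measurable fun b ↦ (η (a, b)).map (fun c ↦ f (b, c)) :=
    Measure.measurable_of_measurable_coe _ fun s hs ↦ by
      rw [hsec hs]
      exact measurable_kernel_prodMk_left (κ := η.comap (Prod.mk a) measurable_prodMk_left) (hf hs)
  ext s hs
  rw [map_apply' _ hf _ hs, compProd_apply (hf hs), Measure.bind_apply hs hmeas.aemeasurable,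
    hsec hs]
  rfl

end ProbabilityTheory.Kernel

namespace ProbabilityTheory

variable {Ω 𝓧 𝓨 𝓩 : Type*} {mΩ : MeasurableSpace Ω} {m𝓧 : MeasurableSpace 𝓧}
  {m𝓨 : MeasurableSpace 𝓨} {m𝓩 : MeasurableSpace 𝓩}
  {P : Measure Ω} {X : Ω → 𝓧} {Y : Ω → 𝓨} {Z : Ω → 𝓩} {κ : Kernel 𝓧 𝓨}

lemma hasCondDistrib_const [IsFiniteMeasure P] (hX : AEMeasurable X P) (c : 𝓨) :
    HasCondDistrib (fun _ ↦ c) X (Kernel.const 𝓧 (Measure.dirac c)) P where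
  map_eq := by
    rw [Measure.compProd_const, Measure.prod_dirac,
      AEMeasurable.map_map_of_aemeasurable (by fun_prop) hX]
    rfl

lemma hasCondDistrib_condDistrib [StandardBorelSpace 𝓨] [Nonempty 𝓨] [IsFiniteMeasure P]
    (hX : AEMeasurable X P) (hY : AEMeasurable Y P) :
    HasCondDistrib Y X (condDistrib Y X P) P :=
  ⟨by fun_prop, (compProd_map_condDistrib hY).symm⟩

lemma hasCondDistrib_iff_condDistrib_ae_eq [StandardBorelSpace 𝓨] [Nonempty 𝓨]
    [IsFiniteMeasure P] [IsFiniteKernel κ] (hX : AEMeasurable X P) (hY : AEMeasurable Y P) :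
    HasCondDistrib Y X κ P ↔ condDistrib Y X P =ᵐ[P.map X] κ := by
  rw [condDistrib_ae_eq_iff_measure_eq_compProd X hY]
  exact ⟨fun h ↦ h.map_eq, fun h ↦ ⟨by fun_prop, h⟩⟩

lemma HasCondDistrib.compProd [SFinite P] [IsSFiniteKernel κ] {η : Kernel (𝓧 × 𝓨) 𝓩}
    [IsSFiniteKernel η] (hY : HasCondDistrib Y X κ P)
    (hZ : HasCondDistrib Z (fun ω ↦ (X ω, Y ω)) η P) :
    HasCondDistrib (fun ω ↦ (Y ω, Z ω)) X (κ ⊗ₖ η) P where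
  aemeasurable := by
    have := hZ.aemeasurable_fst
    have := hZ.aemeasurable_snd
    fun_prop
  map_eq := calc
    P.map (fun ω ↦ (X ω, Y ω, Z ω))
    _ = (P.map (fun ω ↦ ((X ω, Y ω), Z ω))).map MeasurableEquiv.prodAssoc := by
      rw [AEMeasurable.map_map_of_aemeasurable (by fun_prop) hZ.aemeasurable]
      rfl
    _ = P.map X ⊗ₘ (κ ⊗ₖ η) := by rw [hZ.map_eq, hY.map_eq, Measure.compProd_assoc']

lemma HasCondDistrib.prodMk_of_condIndepFun [StandardBorelSpace Ω] [IsFiniteMeasure P]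
    [StandardBorelSpace 𝓨] [Nonempty 𝓨] [StandardBorelSpace 𝓩] [Nonempty 𝓩] [IsFiniteKernel κ]
    (h : HasCondDistrib Y X κ P) (hX : Measurable X) (hY : Measurable Y) (hZ : Measurable Z)
    (hYZ : Y ⟂ᵢ[X, hX; P] Z) :
    HasCondDistrib Y (fun ω ↦ (X ω, Z ω)) (κ.prodMkRight 𝓩) P := by
  rw [hasCondDistrib_iff_condDistrib_ae_eq (by fun_prop) hY.aemeasurable] at h ⊢
  refine ((condIndepFun_iff_condDistrib_prod_ae_eq_prodMkRight hY hZ hX).1 hYZ.symm).trans ?_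
  rw [← Measure.fst_map_prodMk hZ] at h
  exact ae_of_ae_map measurable_fst.aemeasurable h

end ProbabilityTheory

section CausalKernel

variable {𝒳 𝒴 : ℕ → Type*} [∀ i, MeasurableSpace (𝒳 i)] [∀ i, MeasurableSpace (𝒴 i)]
  (κ : (i : ℕ) → Kernel ((Π j : Fin i, 𝒴 j) × (Π j : Fin (i + 1), 𝒳 j)) (𝒴 i))

noncomputable def causalKernel : (m : ℕ) → Kernel (Π j : Fin m, 𝒳 j) (Π j : Fin m, 𝒴 j)
  | 0 => Kernel.const _ (Measure.dirac fun j ↦ j.elim0)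
  | m + 1 => (((causalKernel m).comap Fin.init measurable_fin_init) ⊗ₖ
      (κ m).comap Prod.swap measurable_swap).map
        (MeasurableEquiv.piFinSnoc fun j : Fin (m + 1) ↦ 𝒴 j)

instance isMarkovKernel_causalKernel [∀ i, IsMarkovKernel (κ i)] :
    ∀ m, IsMarkovKernel (causalKernel κ m)
  | 0 => by rw [causalKernel]; infer_instance
  | m + 1 => by
    have := isMarkovKernel_causalKernel m
    rw [causalKernel]
    exact Kernel.IsMarkovKernel.map _ (MeasurableEquiv.piFinSnoc _).measurable

lemma causalKernel_apply [∀ i, IsMarkovKernel (κ i)] :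
    ∀ m x, causalKernel κ m x = causalProd κ m x
  | 0, _ => rfl
  | m + 1, x => by
    rw [causalKernel]
    refine (Kernel.map_compProd_apply_eq_bind _ _
      (MeasurableEquiv.piFinSnoc _).measurable x).trans ?_
    rw [Kernel.comap_apply, causalKernel_apply m, causalProd]
    rfl

end CausalKernel

section CausalFactorization

variable {Ω : Type*} [MeasurableSpace Ω] [StandardBorelSpace Ω] {μ : Measure Ω}
  [IsProbabilityMeasure μ] {𝒳 𝒴 : ℕ → Type*}
  [∀ i, MeasurableSpace (𝒳 i)] [∀ i, StandardBorelSpace (𝒳 i)]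
  [∀ i, MeasurableSpace (𝒴 i)] [∀ i, StandardBorelSpace (𝒴 i)] [∀ i, Nonempty (𝒴 i)]
  {X : (i : ℕ) → Ω → 𝒳 i} {Y : (i : ℕ) → Ω → 𝒴 i}
  {κ : (i : ℕ) → Kernel ((Π j : Fin i, 𝒴 j) × (Π j : Fin (i + 1), 𝒳 j)) (𝒴 i)}
  [∀ i, IsMarkovKernel (κ i)]

lemma hasCondDistrib_causalKernel_succ (hX : ∀ i, Measurable (X i))
    (hY : ∀ i, Measurable (Y i)) {m : ℕ}
    (ih : HasCondDistrib (fun ω (j : Fin m) ↦ Y j ω) (fun ω (j : Fin m) ↦ X j ω)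
      (causalKernel κ m) μ)
    (hκ : HasCondDistrib (Y m) (fun ω ↦ ((fun j : Fin m ↦ Y j ω), fun j : Fin (m + 1) ↦ X j ω))
      (κ m) μ)
    (hCI : (fun ω (j : Fin m) ↦ Y j ω) ⟂ᵢ[fun ω (j : Fin m) ↦ X j ω,
      measurable_pi_lambda _ fun j ↦ hX j; μ] X m) :
    HasCondDistrib (fun ω (j : Fin (m + 1)) ↦ Y j ω) (fun ω (j : Fin (m + 1)) ↦ X j ω)
      (causalKernel κ (m + 1)) μ := by
  have : Nonempty (𝒳 m) := (nonempty_of_isProbabilityMeasure μ).map (X m)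
  have hYpast : HasCondDistrib (fun ω (j : Fin m) ↦ Y j ω) (fun ω (j : Fin (m + 1)) ↦ X j ω)
      ((causalKernel κ m).comap Fin.init measurable_fin_init) μ := by
    have := (ih.prodMk_of_condIndepFun (measurable_pi_lambda _ fun j : Fin m ↦ hX j)
      (measurable_pi_lambda _ fun j ↦ hY j) (hX m)
      hCI).measurableEquiv_comp_right (MeasurableEquiv.piFinSnoc fun j : Fin (m + 1) ↦ 𝒳 j)
    rwa [MeasurableEquiv.piFinSnoc_comp_prodMk] at this
  have hYnow : HasCondDistrib (Y m)
      (fun ω ↦ ((fun j : Fin (m + 1) ↦ X j ω), fun j : Fin m ↦ Y j ω))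
      ((κ m).comap Prod.swap measurable_swap) μ :=
    hκ.measurableEquiv_comp_right MeasurableEquiv.prodComm
  have := (hYpast.compProd hYnow).comp_left
    (MeasurableEquiv.piFinSnoc fun j : Fin (m + 1) ↦ 𝒴 j).measurable
  rwa [MeasurableEquiv.piFinSnoc_comp_prodMk] at this

lemma hasCondDistrib_causalKernel (hX : ∀ i, Measurable (X i)) (hY : ∀ i, Measurable (Y i))
    (hκ : ∀ i, HasCondDistrib (Y i)
      (fun ω ↦ ((fun j : Fin i ↦ Y j ω), fun j : Fin (i + 1) ↦ X j ω)) (κ i) μ)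
    {n : ℕ} (hMC : ∀ i < n,
      (fun ω (j : Fin (i + 1)) ↦ Y j ω) ⟂ᵢ[fun ω (j : Fin (i + 1)) ↦ X j ω,
        measurable_pi_lambda _ fun j ↦ hX j; μ] X (i + 1)) :
    ∀ m ≤ n + 1, HasCondDistrib (fun ω (j : Fin m) ↦ Y j ω) (fun ω (j : Fin m) ↦ X j ω)
      (causalKernel κ m) μ := by
  have hY₀ : (fun ω (j : Fin 0) ↦ Y j ω) = fun _ j ↦ j.elim0 :=
    funext fun _ ↦ funext fun j ↦ j.elim0
  intro m hm
  induction m with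
  | zero =>
    rw [hY₀]
    exact hasCondDistrib_const (measurable_pi_lambda _ fun j : Fin 0 ↦ hX j).aemeasurable _
  | succ m ih =>
    refine hasCondDistrib_causalKernel_succ hX hY (ih (by omega)) (hκ m) ?_
    rcases m with _ | i
    · rw [hY₀]
      exact condIndepFun_const_left _ _
    · exact hMC i (by omega)

end CausalFactorization

theorem stmt2_general
    {Ω : Type*} [MeasurableSpace Ω] [StandardBorelSpace Ω]
    (μ : Measure Ω) [IsProbabilityMeasure μ]
    {𝒳 𝒴 : ℕ → Type*}
    [∀ i, MeasurableSpace (𝒳 i)] [∀ i, TopologicalSpace (𝒳 i)]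
    [∀ i, PolishSpace (𝒳 i)] [∀ i, BorelSpace (𝒳 i)]
    [∀ i, MeasurableSpace (𝒴 i)] [∀ i, TopologicalSpace (𝒴 i)]
    [∀ i, PolishSpace (𝒴 i)] [∀ i, BorelSpace (𝒴 i)] [∀ i, Nonempty (𝒴 i)]
    (n : ℕ) (X : (i : ℕ) → Ω → 𝒳 i) (Y : (i : ℕ) → Ω → 𝒴 i)
    (hX : ∀ i, Measurable (X i)) (hY : ∀ i, Measurable (Y i))
    -- hypothesis: `Y^i ↔ X^i ↔ X_{i+1}` for every `i < n`
    (hMC : ∀ i < n,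
      CondIndepFun
        (MeasurableSpace.comap (fun ω (j : Fin (i + 1)) => X j ω) inferInstance)
        ((measurable_pi_lambda _ fun j : Fin (i + 1) => hX j).comap_le)
        (fun ω (j : Fin (i + 1)) => Y j ω) (X (i + 1)) μ) :
    -- conclusion: causal factorization of the regular conditional distribution
    ∀ᵐ x ∂(μ.map (fun ω (j : Fin (n + 1)) => X j ω)),
      condDistrib (fun ω (j : Fin (n + 1)) => Y j ω) (fun ω (j : Fin (n + 1)) => X j ω) μ x
        = causalProd
            (fun i => condDistrib (Y i)
              (fun ω => ((fun j : Fin i => Y j ω), (fun j : Fin (i + 1) => X j ω))) μ)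
            (n + 1) x := by
  have hκ (i : ℕ) := hasCondDistrib_condDistrib (P := μ)
    ((measurable_pi_lambda _ fun j : Fin i ↦ hY j).prodMk
      (measurable_pi_lambda _ fun j : Fin (i + 1) ↦ hX j)).aemeasurable (hY i).aemeasurable
  have hfactor := (hasCondDistrib_iff_condDistrib_ae_eq
    (measurable_pi_lambda _ fun j : Fin (n + 1) ↦ hX j).aemeasurable
    (measurable_pi_lambda _ fun j : Fin (n + 1) ↦ hY j).aemeasurable).1
    (hasCondDistrib_causalKernel hX hY hκ hMC (n + 1) le_rfl)
  filter_upwards [hfactor] with x hx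
  rw [hx, causalKernel_apply]

/-- If for each `i < n` the Markov chain `Y^i ↔ X^i ↔ X_{i+1}` holds
(`Y^i` conditionally independent of `X_{i+1}` given `X^i`), then the regular conditional
distribution of `Y^n` given `X^n` factorizes causally:
`P_{Y^n|X^n}(dy^n|x^n) = ⊗_{i=0}^n P_{Y_i|Y^{i-1},X^i}(dy_i|y^{i-1},x^i)` for
`P_{X^n}`-almost all `x^n`. -/
theorem stmt2
    {Ω : Type*} [MeasurableSpace Ω] [StandardBorelSpace Ω] [Nonempty Ω]
    (μ : Measure Ω) [IsProbabilityMeasure μ]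
    {𝒳 𝒴 : ℕ → Type*}
    [∀ i, MeasurableSpace (𝒳 i)] [∀ i, TopologicalSpace (𝒳 i)]
    [∀ i, PolishSpace (𝒳 i)] [∀ i, BorelSpace (𝒳 i)]
    [∀ i, MeasurableSpace (𝒴 i)] [∀ i, TopologicalSpace (𝒴 i)]
    [∀ i, PolishSpace (𝒴 i)] [∀ i, BorelSpace (𝒴 i)] [∀ i, Nonempty (𝒴 i)]
    (n : ℕ) (X : (i : ℕ) → Ω → 𝒳 i) (Y : (i : ℕ) → Ω → 𝒴 i)
    (hX : ∀ i, Measurable (X i)) (hY : ∀ i, Measurable (Y i))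
    -- hypothesis: `Y^i ↔ X^i ↔ X_{i+1}` for every `i < n`
    (hMC : ∀ i < n,
      CondIndepFun
        (MeasurableSpace.comap (fun ω (j : Fin (i + 1)) => X j ω) inferInstance)
        ((measurable_pi_lambda _ fun j : Fin (i + 1) => hX j).comap_le)
        (fun ω (j : Fin (i + 1)) => Y j ω) (X (i + 1)) μ) :
    -- conclusion: causal factorization of the regular conditional distribution
    ∀ᵐ x ∂(μ.map (fun ω (j : Fin (n + 1)) => X j ω)),
      condDistrib (fun ω (j : Fin (n + 1)) => Y j ω) (fun ω (j : Fin (n + 1)) => X j ω) μ x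
        = causalProd
            (fun i => condDistrib (Y i)
              (fun ω => ((fun j : Fin i => Y j ω), (fun j : Fin (i + 1) => X j ω))) μ)
            (n + 1) x :=
  stmt2_general μ n X Y hX hY hMC
end

section
/- Let 0 < p < 1, 0 < q < 1, and let (X_{i-1}, X_i) have the stationary pair distribution P(0,0) = (1−p)q/(p+q), P(1,0) = P(0,1) = pq/(p+q), P(1,1) = p(1−q)/(p+q), with distortion d(x_i, x_{i-1}, y) = 1 if y ≠ 1_{x_i = x_{i-1} = 1} and 0 otherwise, and D_max := min( q(1+p)/(p+q), p(1−q)/(p+q) ). Then the single-letter causal rate distortion function R^c(D) := min { I((X_{i-1},X_i); Y) : P(y|x_i,x_{i-1}) a conditional pmf with E[d(X_i,X_{i-1},Y)] ≤ D } satisfies R^c(D) = H_b(q(1+p)/(p+q)) − H_b(D) for 0 ≤ D ≤ D_max, and R^c(D) = 0 for D > D_max. -/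
/-- The stationary joint pmf of the consecutive pair `(X_i, X_{i-1})` of the binary Markov
source (first coordinate `x_i`, second `x_{i-1}`). -/
noncomputable def pairP (p q : ℝ) : Fin 2 × Fin 2 → ℝ := fun x =>
  if x = (0, 0) then (1 - p) * q / (p + q)
  else if x = (1, 1) then p * (1 - q) / (p + q)
  else p * q / (p + q)

/-- The distortion `d(x_i, x_{i-1}, y)`: the Hamming distance between `y` and the indicator
`1_{x_i = x_{i-1} = 1}`. -/
def dH : Fin 2 × Fin 2 → Fin 2 → ℝ := fun x y =>
  if y = (if x = (1, 1) then 1 else 0) then 0 else 1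

/-- The expected distortion `E[d(X_i, X_{i-1}, Y)]` of a conditional pmf `W`. -/
noncomputable def expDist (p q : ℝ) (W : Fin 2 × Fin 2 → Fin 2 → ℝ) : ℝ :=
  ∑ x, ∑ y, pairP p q x * W x y * dH x y

/-- The output pmf of `Y` induced by the conditional pmf `W`. -/
noncomputable def outP (p q : ℝ) (W : Fin 2 × Fin 2 → Fin 2 → ℝ) (y : Fin 2) : ℝ :=
  ∑ x, pairP p q x * W x y

/-- The mutual information `I((X_{i-1}, X_i); Y)` (in bits) induced by the conditional
pmf `W`. -/
noncomputable def mutI (p q : ℝ) (W : Fin 2 × Fin 2 → Fin 2 → ℝ) : ℝ :=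
  ∑ x, ∑ y, pairP p q x * W x y *
    Real.logb 2 ((pairP p q x * W x y) / (pairP p q x * outP p q W y))

/-- The binary entropy function (base 2), with `H_b 0 = H_b 1 = 0`. -/
noncomputable def binEnt (t : ℝ) : ℝ :=
  -(t * Real.logb 2 t) - (1 - t) * Real.logb 2 (1 - t)

/-!
The distortion depends on the source only through `V = consecutiveOnes X`, so this is the
rate-distortion problem of the Bernoulli source `V` under Hamming distortion. Given a channel with
output `Y` and `D ≤ 1/2`, let `Q` be the law of `(X, Y)` in which `Y` keeps its distribution, `V` is
obtained from `Y` through a binary symmetric channel of crossover `D`, and `X` is drawn from the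
source given `V`. Then `I(X;Y) = KL(P_{XY} ‖ Q) + H_b(P(V = 0)) + E[log₂ bsc_D(V, Y)]`, and Gibbs'
inequality together with `E d ≤ D` gives `I(X;Y) ≥ H_b(P(V = 0)) - H_b(D)`. Equality holds for the
channel obtained from that backward channel by Bayes' rule, which exists exactly when
`D ≤ min(P(V = 0), P(V = 1))`. Above this threshold the optimal channel at the threshold already
has `I = 0`, since `H_b` is symmetric about `1/2`.
-/

open Real Finset

section RelEntropy

variable {α : Type*} [Fintype α]

lemma sub_le_mul_log_div {a m : ℝ} (ha : 0 ≤ a) (hm : 0 ≤ m) (h : m = 0 → a = 0) :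
    a - m ≤ a * log (a / m) := by
  rcases hm.eq_or_lt with rfl | hm
  · simp [h rfl]
  calc a - m = m * (a / m - 1) := by field_simp
    _ ≤ m * (a / m * log (a / m)) :=
      mul_le_mul_of_nonneg_left (self_sub_one_le_mul_log (div_nonneg ha hm.le)) hm.le
    _ = a * log (a / m) := by field_simp

noncomputable def relEntropy (μ ν : α → ℝ) : ℝ := ∑ i, μ i * logb 2 (μ i / ν i)

theorem relEntropy_nonneg {μ ν : α → ℝ} (hμ : ∀ i, 0 ≤ μ i) (hν : ∀ i, 0 ≤ ν i)
    (hsupp : ∀ i, ν i = 0 → μ i = 0) (hsum : ∑ i, ν i ≤ ∑ i, μ i) :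
    0 ≤ relEntropy μ ν := by
  have hlog : ∑ i, (μ i - ν i) ≤ ∑ i, μ i * log (μ i / ν i) :=
    sum_le_sum fun i _ => sub_le_mul_log_div (hμ i) (hν i) (hsupp i)
  rw [sum_sub_distrib] at hlog
  have hbits : relEntropy μ ν = (∑ i, μ i * log (μ i / ν i)) / log 2 := by
    simp only [relEntropy, logb, sum_div, mul_div_assoc]
  rw [hbits]
  exact div_nonneg (by linarith) (log_nonneg one_le_two)

theorem relEntropy_self (μ : α → ℝ) : relEntropy μ μ = 0 :=
  sum_eq_zero fun i _ => by rcases eq_or_ne (μ i) 0 with h | h <;> simp [h]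

theorem relEntropy_eq_relEntropy_mul_add {μ ν ρ : α → ℝ}
    (h : ∀ i, μ i ≠ 0 → ν i ≠ 0 ∧ ρ i ≠ 0) :
    relEntropy μ ν = relEntropy μ (ν * ρ) + ∑ i, μ i * logb 2 (ρ i) := by
  rw [relEntropy, relEntropy, ← sum_add_distrib]
  refine sum_congr rfl fun i _ => ?_
  rcases eq_or_ne (μ i) 0 with hμ | hμ
  · simp [hμ]
  obtain ⟨hν, hρ⟩ := h i hμ
  rw [Pi.mul_apply, ← mul_add, ← logb_mul (div_ne_zero hμ (mul_ne_zero hν hρ)) hρ]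
  congr 2
  field_simp

end RelEntropy

section Channel

variable {ι κ : Type*}

def jointLaw (P : ι → ℝ) (W : ι → κ → ℝ) (z : ι × κ) : ℝ := P z.1 * W z.1 z.2

theorem jointLaw_nonneg {P : ι → ℝ} {W : ι → κ → ℝ} (hP : ∀ x, 0 ≤ P x)
    (hW0 : ∀ x y, 0 ≤ W x y) (z : ι × κ) : 0 ≤ jointLaw P W z :=
  mul_nonneg (hP _) (hW0 _ _)

variable [Fintype ι]

noncomputable def outputDist (P : ι → ℝ) (W : ι → κ → ℝ) (y : κ) : ℝ := ∑ x, P x * W x y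

theorem outputDist_nonneg {P : ι → ℝ} {W : ι → κ → ℝ} (hP : ∀ x, 0 ≤ P x)
    (hW0 : ∀ x y, 0 ≤ W x y) (y : κ) : 0 ≤ outputDist P W y :=
  sum_nonneg fun x _ => mul_nonneg (hP x) (hW0 x y)

theorem mul_outputDist_ne_zero {P : ι → ℝ} {W : ι → κ → ℝ} (hP : ∀ x, 0 ≤ P x)
    (hW0 : ∀ x y, 0 ≤ W x y) {x : ι} {y : κ} (h : P x * W x y ≠ 0) :
    P x * outputDist P W y ≠ 0 := by
  refine mul_ne_zero (left_ne_zero_of_mul h) fun hy => h ?_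
  exact (sum_eq_zero_iff_of_nonneg fun x _ => mul_nonneg (hP x) (hW0 x y)).1 hy x (mem_univ x)

variable [Fintype κ]

noncomputable def mutualInfo (P : ι → ℝ) (W : ι → κ → ℝ) : ℝ :=
  ∑ x, ∑ y, P x * W x y * logb 2 (P x * W x y / (P x * outputDist P W y))

noncomputable def expectedDistortion (P : ι → ℝ) (d W : ι → κ → ℝ) : ℝ :=
  ∑ x, ∑ y, P x * W x y * d x y

def hammingDistortion [DecidableEq κ] (f : ι → κ) (x : ι) (y : κ) : ℝ :=
  if y = f x then 0 else 1

def rateDistortionSet (P : ι → ℝ) (d : ι → κ → ℝ) (D : ℝ) : Set ℝ :=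
  {r | ∃ W : ι → κ → ℝ, (∀ x y, 0 ≤ W x y) ∧ (∀ x, ∑ y, W x y = 1) ∧
    expectedDistortion P d W ≤ D ∧ r = mutualInfo P W}

variable {P : ι → ℝ} {W : ι → κ → ℝ}

theorem mutualInfo_eq_relEntropy :
    mutualInfo P W = relEntropy (jointLaw P W) fun z => P z.1 * outputDist P W z.2 := by
  rw [mutualInfo, relEntropy, Fintype.sum_prod_type]
  rfl

theorem sum_sum_mul_eq_sum (hW1 : ∀ x, ∑ y, W x y = 1) : ∑ x, ∑ y, P x * W x y = ∑ x, P x := by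
  simp only [← mul_sum, hW1, mul_one]

theorem sum_outputDist (hW1 : ∀ x, ∑ y, W x y = 1) : ∑ y, outputDist P W y = ∑ x, P x := by
  rw [← sum_sum_mul_eq_sum hW1]
  exact sum_comm

theorem sum_jointLaw (hW1 : ∀ x, ∑ y, W x y = 1) : ∑ z, jointLaw P W z = ∑ x, P x := by
  rw [Fintype.sum_prod_type]
  exact sum_sum_mul_eq_sum hW1

theorem mutualInfo_nonneg (hP : ∀ x, 0 ≤ P x) (hP1 : ∑ x, P x = 1) (hW0 : ∀ x y, 0 ≤ W x y)
    (hW1 : ∀ x, ∑ y, W x y = 1) : 0 ≤ mutualInfo P W := by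
  rw [mutualInfo_eq_relEntropy]
  refine relEntropy_nonneg (jointLaw_nonneg hP hW0)
    (fun z => mul_nonneg (hP _) (outputDist_nonneg hP hW0 _))
    (fun z hz => by_contra fun h => mul_outputDist_ne_zero hP hW0 h hz) ?_
  simp only [sum_jointLaw hW1, Fintype.sum_prod_type, ← mul_sum, sum_outputDist hW1, hP1,
    mul_one, le_refl]

theorem mul_le_expectedDistortion {d : ι → κ → ℝ} (hP : ∀ x, 0 ≤ P x) (hW0 : ∀ x y, 0 ≤ W x y)
    (hd : ∀ x y, 0 ≤ d x y) (x : ι) (y : κ) : P x * W x y * d x y ≤ expectedDistortion P d W := by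
  have hterm : ∀ x y, 0 ≤ P x * W x y * d x y := fun x y =>
    mul_nonneg (mul_nonneg (hP x) (hW0 x y)) (hd x y)
  calc P x * W x y * d x y ≤ ∑ y, P x * W x y * d x y :=
        single_le_sum (fun y _ => hterm x y) (mem_univ y)
    _ ≤ expectedDistortion P d W :=
        single_le_sum (f := fun x => ∑ y, P x * W x y * d x y)
          (fun x _ => sum_nonneg fun y _ => hterm x y) (mem_univ x)

end Channel

section Pushforward

variable {ι κ : Type*} [Fintype ι] [Fintype κ] [DecidableEq κ]

noncomputable def pushforward (P : ι → ℝ) (f : ι → κ) (w : κ) : ℝ := ∑ x with f x = w, P x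

theorem sum_pushforward (P : ι → ℝ) (f : ι → κ) : ∑ w, pushforward P f w = ∑ x, P x :=
  sum_fiberwise _ _ _

theorem sum_mul_comp_eq_sum_pushforward (P : ι → ℝ) (f : ι → κ) (h : κ → ℝ) :
    ∑ x, P x * h (f x) = ∑ w, pushforward P f w * h w := by
  rw [← sum_fiberwise univ f]
  refine sum_congr rfl fun w _ => ?_
  rw [pushforward, sum_mul]
  exact sum_congr rfl fun x hx => by rw [(mem_filter.1 hx).2]

theorem sum_mul_div_pushforward {P : ι → ℝ} {f : ι → κ} (hπ : ∀ w, pushforward P f w ≠ 0)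
    (h : κ → ℝ) : ∑ x, P x * (h (f x) / pushforward P f (f x)) = ∑ w, h w := by
  rw [sum_mul_comp_eq_sum_pushforward P f (fun w => h w / pushforward P f w)]
  exact sum_congr rfl fun w _ => mul_div_cancel₀ _ (hπ w)

end Pushforward

theorem binEnt_one_sub (t : ℝ) : binEnt (1 - t) = binEnt t := by
  rw [binEnt, binEnt, sub_sub_cancel]
  ring

section Binary

def bsc (D : ℝ) (w y : Fin 2) : ℝ := if y = w then 1 - D else D

theorem bsc_nonneg {D : ℝ} (hD0 : 0 ≤ D) (hD1 : D ≤ 1) (w y : Fin 2) : 0 ≤ bsc D w y := by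
  unfold bsc
  split_ifs <;> linarith

theorem sum_bsc_left (D : ℝ) (y : Fin 2) : ∑ w, bsc D w y = 1 := by
  fin_cases y <;> simp [bsc, Fin.sum_univ_two]

theorem sum_bsc_mul_hammingDistortion (D : ℝ) (y : Fin 2) :
    ∑ w, bsc D w y * hammingDistortion id w y = D := by
  fin_cases y <;> simp [bsc, hammingDistortion, Fin.sum_univ_two]

theorem logb_bsc {ι : Type*} (D : ℝ) (f : ι → Fin 2) (x : ι) (y : Fin 2) :
    logb 2 (bsc D (f x) y) =
      logb 2 (1 - D) + hammingDistortion f x y * (logb 2 D - logb 2 (1 - D)) := by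
  unfold bsc hammingDistortion
  split_ifs <;> ring

variable {ι : Type*} [Fintype ι] {P : ι → ℝ} {f : ι → Fin 2} {W : ι → Fin 2 → ℝ} {D : ℝ}

theorem pushforward_one (hP1 : ∑ x, P x = 1) : pushforward P f 1 = 1 - pushforward P f 0 := by
  rw [← hP1, ← sum_pushforward P f, Fin.sum_univ_two]
  ring

theorem sum_mul_logb_bsc (hP1 : ∑ x, P x = 1) (hW1 : ∀ x, ∑ y, W x y = 1) :
    ∑ x, ∑ y, P x * W x y * logb 2 (bsc D (f x) y) =
      (1 - expectedDistortion P (hammingDistortion f) W) * logb 2 (1 - D) +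
        expectedDistortion P (hammingDistortion f) W * logb 2 D := by
  calc ∑ x, ∑ y, P x * W x y * logb 2 (bsc D (f x) y)
      = ∑ x, ∑ y, (P x * W x y * logb 2 (1 - D) +
          P x * W x y * hammingDistortion f x y * (logb 2 D - logb 2 (1 - D))) :=
        sum_congr rfl fun x _ => sum_congr rfl fun y _ => by rw [logb_bsc]; ring
    _ = (∑ x, ∑ y, P x * W x y) * logb 2 (1 - D) +
          expectedDistortion P (hammingDistortion f) W * (logb 2 D - logb 2 (1 - D)) := by
        simp only [sum_add_distrib, ← sum_mul, expectedDistortion]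
    _ = _ := by rw [sum_sum_mul_eq_sum hW1, hP1]; ring

theorem sum_mul_logb_pushforward (hP1 : ∑ x, P x = 1) (hW1 : ∀ x, ∑ y, W x y = 1) :
    ∑ x, ∑ y, P x * W x y * logb 2 (pushforward P f (f x)) = -binEnt (pushforward P f 0) := by
  calc ∑ x, ∑ y, P x * W x y * logb 2 (pushforward P f (f x))
      = ∑ x, P x * logb 2 (pushforward P f (f x)) := by
        simp only [← sum_mul, ← mul_sum, hW1, mul_one]
    _ = ∑ w, pushforward P f w * logb 2 (pushforward P f w) :=
        sum_mul_comp_eq_sum_pushforward P f fun w => logb 2 (pushforward P f w)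
    _ = -binEnt (pushforward P f 0) := by
        rw [Fin.sum_univ_two, pushforward_one hP1, binEnt]
        ring

noncomputable def comparisonLaw (P : ι → ℝ) (f : ι → Fin 2) (D : ℝ) (W : ι → Fin 2 → ℝ)
    (z : ι × Fin 2) : ℝ :=
  P z.1 * outputDist P W z.2 * (bsc D (f z.1) z.2 / pushforward P f (f z.1))

theorem sum_comparisonLaw (hW1 : ∀ x, ∑ y, W x y = 1) (hπ : ∀ w, pushforward P f w ≠ 0) :
    ∑ z, comparisonLaw P f D W z = ∑ x, P x := by
  calc ∑ z, comparisonLaw P f D W z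
      = ∑ y, outputDist P W y * ∑ x, P x * (bsc D (f x) y / pushforward P f (f x)) := by
        rw [Fintype.sum_prod_type, sum_comm]
        simp only [comparisonLaw, mul_sum]
        exact sum_congr rfl fun y _ => sum_congr rfl fun x _ => by ring
    _ = ∑ y, outputDist P W y * ∑ w, bsc D w y :=
        sum_congr rfl fun y _ => by rw [sum_mul_div_pushforward hπ fun w => bsc D w y]
    _ = ∑ x, P x := by simp only [sum_bsc_left, mul_one, sum_outputDist hW1]

theorem mutualInfo_eq_relEntropy_add (hP : ∀ x, 0 ≤ P x) (hP1 : ∑ x, P x = 1)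
    (hW0 : ∀ x y, 0 ≤ W x y) (hW1 : ∀ x, ∑ y, W x y = 1) (hπ : ∀ w, pushforward P f w ≠ 0)
    (hsupp : ∀ x y, P x * W x y ≠ 0 → bsc D (f x) y ≠ 0) :
    mutualInfo P W = relEntropy (jointLaw P W) (comparisonLaw P f D W) +
      ((1 - expectedDistortion P (hammingDistortion f) W) * logb 2 (1 - D) +
        expectedDistortion P (hammingDistortion f) W * logb 2 D) +
      binEnt (pushforward P f 0) := by
  have hsplit : ∑ x, ∑ y, P x * W x y * logb 2 (bsc D (f x) y / pushforward P f (f x)) =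
      ∑ x, ∑ y, P x * W x y * logb 2 (bsc D (f x) y) -
        ∑ x, ∑ y, P x * W x y * logb 2 (pushforward P f (f x)) := by
    simp only [← sum_sub_distrib]
    refine sum_congr rfl fun x _ => sum_congr rfl fun y _ => ?_
    rcases eq_or_ne (P x * W x y) 0 with h | h
    · simp [h]
    · rw [logb_div (hsupp x y h) (hπ _)]
      ring
  calc mutualInfo P W = relEntropy (jointLaw P W) (comparisonLaw P f D W) +
        ∑ x, ∑ y, P x * W x y * logb 2 (bsc D (f x) y / pushforward P f (f x)) := by
        rw [mutualInfo_eq_relEntropy, relEntropy_eq_relEntropy_mul_add (μ := jointLaw P W)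
          (ρ := fun z => bsc D (f z.1) z.2 / pushforward P f (f z.1))
          fun z h => ⟨mul_outputDist_ne_zero hP hW0 h, div_ne_zero (hsupp z.1 z.2 h) (hπ _)⟩,
          Fintype.sum_prod_type]
        rfl
    _ = _ := by
        rw [hsplit, sum_mul_logb_bsc hP1 hW1, sum_mul_logb_pushforward hP1 hW1]
        ring

theorem bsc_ne_zero_of_expectedDistortion_le (hP : ∀ x, 0 ≤ P x) (hW0 : ∀ x y, 0 ≤ W x y)
    (hD0 : 0 ≤ D) (hD1 : D < 1) (hE : expectedDistortion P (hammingDistortion f) W ≤ D)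
    (x : ι) (y : Fin 2) (hxy : P x * W x y ≠ 0) : bsc D (f x) y ≠ 0 := by
  unfold bsc
  split_ifs with hy
  · linarith
  rintro rfl
  have hd : ∀ x y, 0 ≤ hammingDistortion f x y := fun x y => by
    unfold hammingDistortion; split_ifs <;> norm_num
  have hterm := mul_le_expectedDistortion hP hW0 hd x y
  rw [hammingDistortion, if_neg hy, mul_one] at hterm
  exact hxy (le_antisymm (hterm.trans hE) (mul_nonneg (hP x) (hW0 x y)))

theorem binEnt_sub_binEnt_le_mutualInfo (hP : ∀ x, 0 ≤ P x) (hP1 : ∑ x, P x = 1)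
    (hW0 : ∀ x y, 0 ≤ W x y) (hW1 : ∀ x, ∑ y, W x y = 1) (hπ : ∀ w, 0 < pushforward P f w)
    (hD0 : 0 ≤ D) (hD : D ≤ 1 / 2) (hE : expectedDistortion P (hammingDistortion f) W ≤ D) :
    binEnt (pushforward P f 0) - binEnt D ≤ mutualInfo P W := by
  have hsupp := bsc_ne_zero_of_expectedDistortion_le hP hW0 hD0 (by linarith) hE
  have hKL : 0 ≤ relEntropy (jointLaw P W) (comparisonLaw P f D W) := by
    refine relEntropy_nonneg (jointLaw_nonneg hP hW0) (fun z => ?_) (fun z hz => ?_) ?_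
    · exact mul_nonneg (mul_nonneg (hP _) (outputDist_nonneg hP hW0 _))
        (div_nonneg (bsc_nonneg hD0 (by linarith) _ _) (hπ _).le)
    · exact by_contra fun h => mul_ne_zero (mul_outputDist_ne_zero hP hW0 h)
        (div_ne_zero (hsupp z.1 z.2 h) (hπ _).ne') hz
    · rw [sum_comparisonLaw hW1 fun w => (hπ w).ne', sum_jointLaw hW1]
  have hlog : logb 2 D ≤ logb 2 (1 - D) := by
    rcases hD0.eq_or_lt with rfl | hD0
    · simp
    · exact logb_le_logb_of_le one_lt_two hD0 (by linarith)
  rw [mutualInfo_eq_relEntropy_add hP hP1 hW0 hW1 (fun w => (hπ w).ne') hsupp]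
  simp only [binEnt]
  nlinarith [mul_nonneg (sub_nonneg.2 hE) (sub_nonneg.2 hlog)]

noncomputable def testChannel (P : ι → ℝ) (f : ι → Fin 2) (D : ℝ) (r : Fin 2 → ℝ)
    (x : ι) (y : Fin 2) : ℝ :=
  r y * bsc D (f x) y / pushforward P f (f x)

variable {r : Fin 2 → ℝ}

theorem testChannel_nonneg (hπ : ∀ w, 0 < pushforward P f w) (hD0 : 0 ≤ D) (hD1 : D ≤ 1)
    (hr0 : ∀ y, 0 ≤ r y) (x : ι) (y : Fin 2) : 0 ≤ testChannel P f D r x y :=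
  div_nonneg (mul_nonneg (hr0 y) (bsc_nonneg hD0 hD1 _ _)) (hπ _).le

theorem sum_testChannel (hπ : ∀ w, pushforward P f w ≠ 0)
    (hr : ∀ w, ∑ y, r y * bsc D w y = pushforward P f w) (x : ι) :
    ∑ y, testChannel P f D r x y = 1 := by
  simp only [testChannel, ← sum_div, hr, div_self (hπ _)]

theorem outputDist_testChannel (hπ : ∀ w, pushforward P f w ≠ 0) (y : Fin 2) :
    outputDist P (testChannel P f D r) y = r y := by
  rw [outputDist]
  simp only [testChannel]
  rw [sum_mul_div_pushforward hπ fun w => r y * bsc D w y, ← mul_sum, sum_bsc_left, mul_one]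

theorem expectedDistortion_testChannel (hπ : ∀ w, pushforward P f w ≠ 0) (hr1 : ∑ y, r y = 1) :
    expectedDistortion P (hammingDistortion f) (testChannel P f D r) = D := by
  calc expectedDistortion P (hammingDistortion f) (testChannel P f D r)
      = ∑ y, ∑ x, P x * (r y * (bsc D (f x) y * hammingDistortion id (f x) y) /
          pushforward P f (f x)) := by
        rw [expectedDistortion, sum_comm]
        exact sum_congr rfl fun y _ => sum_congr rfl fun x _ => by
          rw [testChannel, show hammingDistortion f x y = hammingDistortion id (f x) y from rfl]
          ring
    _ = ∑ y, ∑ w, r y * (bsc D w y * hammingDistortion id w y) :=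
        sum_congr rfl fun y _ =>
          sum_mul_div_pushforward hπ fun w => r y * (bsc D w y * hammingDistortion id w y)
    _ = D := by simp only [← mul_sum, sum_bsc_mul_hammingDistortion, ← sum_mul, hr1, one_mul]

theorem comparisonLaw_testChannel (hπ : ∀ w, pushforward P f w ≠ 0) :
    comparisonLaw P f D (testChannel P f D r) = jointLaw P (testChannel P f D r) := by
  funext z
  rw [comparisonLaw, outputDist_testChannel hπ, jointLaw, testChannel]
  ring

theorem mutualInfo_testChannel (hP : ∀ x, 0 ≤ P x) (hP1 : ∑ x, P x = 1)
    (hπ : ∀ w, 0 < pushforward P f w) (hD0 : 0 ≤ D) (hD1 : D ≤ 1) (hr0 : ∀ y, 0 ≤ r y)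
    (hr : ∀ w, ∑ y, r y * bsc D w y = pushforward P f w) (hr1 : ∑ y, r y = 1) :
    mutualInfo P (testChannel P f D r) = binEnt (pushforward P f 0) - binEnt D := by
  have hπ' : ∀ w, pushforward P f w ≠ 0 := fun w => (hπ w).ne'
  rw [mutualInfo_eq_relEntropy_add (D := D) hP hP1 (testChannel_nonneg hπ hD0 hD1 hr0)
      (sum_testChannel hπ' hr) hπ' fun x y h hb => h (by simp [testChannel, hb]),
    comparisonLaw_testChannel hπ', relEntropy_self, expectedDistortion_testChannel hπ' hr1]
  simp only [binEnt]
  ring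

theorem exists_nonneg_bsc_preimage {m : Fin 2 → ℝ} (hm : m 0 + m 1 = 1)
    (hD : D ≤ min (m 0) (m 1)) :
    ∃ r : Fin 2 → ℝ, (∀ y, 0 ≤ r y) ∧ ∀ w, ∑ y, r y * bsc D w y = m w := by
  obtain ⟨hD₀, hD₁⟩ := le_min_iff.1 hD
  -- at `D = 1/2` the division is junk (`α = 0`), but then `m 1 = D` and every `α` will do
  set α := (m 1 - D) / (1 - 2 * D)
  have hα : α * (1 - 2 * D) = m 1 - D := by
    rcases eq_or_ne (1 - 2 * D) 0 with h | h
    · rw [h, mul_zero]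
      linarith
    · exact div_mul_cancel₀ _ h
  refine ⟨![1 - α, α], fun y => ?_, fun w => ?_⟩
  · have hα0 : 0 ≤ α := div_nonneg (by linarith) (by linarith)
    have hα1 : α ≤ 1 := div_le_one_of_le₀ (by linarith) (by linarith)
    fin_cases y <;> simp <;> linarith
  · fin_cases w <;> simp [bsc, Fin.sum_univ_two] <;> linarith

theorem exists_channel_mutualInfo_eq (hP : ∀ x, 0 ≤ P x) (hP1 : ∑ x, P x = 1)
    (hπ : ∀ w, 0 < pushforward P f w) (hD0 : 0 ≤ D)
    (hD : D ≤ min (pushforward P f 0) (pushforward P f 1)) :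
    ∃ W : ι → Fin 2 → ℝ, (∀ x y, 0 ≤ W x y) ∧ (∀ x, ∑ y, W x y = 1) ∧
      expectedDistortion P (hammingDistortion f) W = D ∧
      mutualInfo P W = binEnt (pushforward P f 0) - binEnt D := by
  have hπ' : ∀ w, pushforward P f w ≠ 0 := fun w => (hπ w).ne'
  have hπ1 := pushforward_one (f := f) hP1
  obtain ⟨r, hr0, hr⟩ := exists_nonneg_bsc_preimage (by rw [hπ1]; ring) hD
  have hr1 : ∑ y, r y = 1 := by
    calc ∑ y, r y = ∑ y, r y * ∑ w, bsc D w y := by simp only [sum_bsc_left, mul_one]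
      _ = ∑ w, pushforward P f w := by simp only [mul_sum, ← hr]; exact sum_comm
      _ = 1 := by rw [sum_pushforward, hP1]
  have hD1 : D ≤ 1 := by linarith [min_le_left (pushforward P f 0) (pushforward P f 1), hπ 1]
  exact ⟨testChannel P f D r, testChannel_nonneg hπ hD0 hD1 hr0, sum_testChannel hπ' hr,
    expectedDistortion_testChannel hπ' hr1, mutualInfo_testChannel hP hP1 hπ hD0 hD1 hr0 hr hr1⟩

theorem isLeast_rateDistortionSet (hP : ∀ x, 0 ≤ P x) (hP1 : ∑ x, P x = 1)
    (hπ : ∀ w, 0 < pushforward P f w) (hD0 : 0 ≤ D)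
    (hD : D ≤ min (pushforward P f 0) (pushforward P f 1)) :
    IsLeast (rateDistortionSet P (hammingDistortion f) D)
      (binEnt (pushforward P f 0) - binEnt D) := by
  obtain ⟨W, hW0, hW1, hE, hI⟩ := exists_channel_mutualInfo_eq hP hP1 hπ hD0 hD
  refine ⟨⟨W, hW0, hW1, hE.le, hI.symm⟩, ?_⟩
  rintro _ ⟨W, hW0, hW1, hE, rfl⟩
  have hπ1 := pushforward_one (f := f) hP1
  have hD2 : D ≤ 1 / 2 := by
    linarith [min_le_left (pushforward P f 0) (pushforward P f 1),
      min_le_right (pushforward P f 0) (pushforward P f 1)]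
  exact binEnt_sub_binEnt_le_mutualInfo hP hP1 hW0 hW1 hπ hD0 hD2 hE

theorem isLeast_rateDistortionSet_of_min_lt (hP : ∀ x, 0 ≤ P x) (hP1 : ∑ x, P x = 1)
    (hπ : ∀ w, 0 < pushforward P f w) (hD : min (pushforward P f 0) (pushforward P f 1) < D) :
    IsLeast (rateDistortionSet P (hammingDistortion f) D) 0 := by
  obtain ⟨W, hW0, hW1, hE, hI⟩ :=
    exists_channel_mutualInfo_eq hP hP1 hπ (le_min (hπ 0).le (hπ 1).le) le_rfl
  refine ⟨⟨W, hW0, hW1, (hE.trans_lt hD).le, ?_⟩, ?_⟩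
  · rw [hI]
    rcases min_choice (pushforward P f 0) (pushforward P f 1) with h | h
    · rw [h, sub_self]
    · rw [h, pushforward_one hP1, binEnt_one_sub, sub_self]
  · rintro _ ⟨W, hW0, hW1, -, rfl⟩
    exact mutualInfo_nonneg hP hP1 hW0 hW1

end Binary

def consecutiveOnes (x : Fin 2 × Fin 2) : Fin 2 := if x = (1, 1) then 1 else 0

section PairSource

variable {p q : ℝ}

theorem pairP_nonneg (hp0 : 0 ≤ p) (hp1 : p ≤ 1) (hq0 : 0 ≤ q) (hq1 : q ≤ 1)
    (x : Fin 2 × Fin 2) : 0 ≤ pairP p q x := by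
  unfold pairP
  split_ifs <;> apply div_nonneg <;> nlinarith

theorem sum_pairP (hpq : p + q ≠ 0) : ∑ x, pairP p q x = 1 := by
  simp only [pairP, Fintype.sum_prod_type, Fin.sum_univ_two, Prod.mk.injEq, Fin.isValue,
    zero_ne_one, one_ne_zero, and_true, and_false, ↓reduceIte]
  field_simp
  ring

theorem pushforward_pairP_zero :
    pushforward (pairP p q) consecutiveOnes 0 = q * (1 + p) / (p + q) := by
  simp only [pushforward, consecutiveOnes, pairP, sum_filter, Fintype.sum_prod_type,
    Fin.sum_univ_two, Prod.mk.injEq, Fin.isValue, ite_eq_right_iff, imp_false, ite_not,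
    zero_ne_one, one_ne_zero, and_true, and_false, ↓reduceIte, add_zero]
  ring

theorem pushforward_pairP_one :
    pushforward (pairP p q) consecutiveOnes 1 = p * (1 - q) / (p + q) := by
  simp [pushforward, sum_filter, consecutiveOnes, pairP]

end PairSource

/-- The single-letter causal rate distortion function of the stationary
binary Markov pair source with Hamming-type distortion toward the indicator of two
consecutive ones equals `H_b(q(1+p)/(p+q)) − H_b(D)` for `0 ≤ D ≤ D_max` and `0` for
`D > D_max`, where `D_max = min(q(1+p)/(p+q), p(1−q)/(p+q))`; moreover the minimum is
attained. -/
theorem stmt15 (p q : ℝ) (hp0 : 0 < p) (hp1 : p < 1) (hq0 : 0 < q) (hq1 : q < 1)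
    (D : ℝ) :
    -- for `0 ≤ D ≤ D_max` : `R^c(D) = H_b(q(1+p)/(p+q)) − H_b(D)`
    (0 ≤ D → D ≤ min (q * (1 + p) / (p + q)) (p * (1 - q) / (p + q)) →
      IsLeast {r : ℝ | ∃ W : Fin 2 × Fin 2 → Fin 2 → ℝ,
          (∀ x y, 0 ≤ W x y) ∧ (∀ x, ∑ y, W x y = 1) ∧
          expDist p q W ≤ D ∧ r = mutI p q W}
        (binEnt (q * (1 + p) / (p + q)) - binEnt D)) ∧
    -- for `D > D_max` : `R^c(D) = 0`
    (D > min (q * (1 + p) / (p + q)) (p * (1 - q) / (p + q)) →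
      IsLeast {r : ℝ | ∃ W : Fin 2 × Fin 2 → Fin 2 → ℝ,
          (∀ x y, 0 ≤ W x y) ∧ (∀ x, ∑ y, W x y = 1) ∧
          expDist p q W ≤ D ∧ r = mutI p q W}
        0) := by
  have hP := pairP_nonneg hp0.le hp1.le hq0.le hq1.le
  have hP1 : ∑ x, pairP p q x = 1 := sum_pairP (by linarith)
  have hπ : ∀ w, 0 < pushforward (pairP p q) consecutiveOnes w := by
    refine Fin.forall_fin_two.2 ⟨?_, ?_⟩
    · rw [pushforward_pairP_zero]
      exact div_pos (by nlinarith) (by linarith)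
    · rw [pushforward_pairP_one]
      exact div_pos (by nlinarith) (by linarith)
  rw [← pushforward_pairP_zero, ← pushforward_pairP_one]
  -- `dH` is `hammingDistortion consecutiveOnes`, so both sets are `rateDistortionSet` by unfolding
  exact ⟨isLeast_rateDistortionSet hP hP1 hπ, isLeast_rateDistortionSet_of_min_lt hP hP1 hπ⟩
end
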